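/- Let p : (D, K) → (C, J), p' : (D', K') → (C', J') and p'' : (D'', K'') → (C'', J'') be comorphisms of sites between small sites, B : (C', J') → (C, J) and B' : (C'', J'') → (C', J') morphisms of sites, A : (D', K') → (D, K) and A' : (D'', K'') → (D', K') continuous functors, and φ : p ∘ A ⟹ B ∘ p', φ' : p' ∘ A' ⟹ B' ∘ p'' natural transformations. Then the η-extension of the pair (A ∘ A', (B ∗ φ') ∘ (φ ∗ A')) is naturally isomorphic to the composite Ã^* ∘ Ã'^* of the η-extensions of (A, φ) and of (A', φ'). -/

import Mathlib

/-!
STATEMENT 8: Functoriality of the η-extension: given comorphisms of sites `p`, `p'`, `p''`,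
morphisms of sites `B`, `B'`, continuous functors `A`, `A'` and natural transformations
`φ : p ∘ A ⟹ B ∘ p'`, `φ' : p' ∘ A' ⟹ B' ∘ p''`, the η-extension of the pair
`(A ∘ A', (B ∗ φ') ∘ (φ ∗ A'))` is naturally isomorphic to the composite `Ã^* ∘ Ã'^*` of the
η-extensions of `(A, φ)` and `(A', φ')`.
-/

open CategoryTheory CategoryTheory.Limits Opposite

universe u

noncomputable section

namespace Statement8

variable {C D C' D' : Type u} [SmallCategory C] [SmallCategory D]
  [SmallCategory C'] [SmallCategory D']

/-- Precomposition with `F.op` on presheaves of types. -/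
abbrev pre {X Y : Type u} [SmallCategory X] [SmallCategory Y] (F : X ⥤ Y) :
    (Yᵒᵖ ⥤ Type u) ⥤ (Xᵒᵖ ⥤ Type u) :=
  (Functor.whiskeringLeft Xᵒᵖ Yᵒᵖ (Type u)).obj F.op

/-- For a comorphism of sites `p : (D, K) ⥤ (C, J)`, the functor
`C_p^* : Sh(C, J) ⥤ Sh(D, K)` given by precomposition with `p` followed by
`K`-sheafification. -/
def Cstar (J : GrothendieckTopology C) (p : D ⥤ C) (K : GrothendieckTopology D) :
    Sheaf J (Type u) ⥤ Sheaf K (Type u) :=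
  sheafToPresheaf J (Type u) ⋙ pre p ⋙ presheafToSheaf K (Type u)

variable (J : GrothendieckTopology C) (K : GrothendieckTopology D)
  (J' : GrothendieckTopology C') (K' : GrothendieckTopology D')
  (p : D ⥤ C) (p' : D' ⥤ C') (B : C' ⥤ C) (A : D' ⥤ D)

/-- The canonical comparison `pre A ⋙ a_{K'} ⟶ a_K ⋙ Sh(A)_*`, obtained as a mate of the
identity across the sheafification adjunctions. -/
def delta3 [Functor.IsContinuous.{u} A K' K] :
    pre A ⋙ presheafToSheaf K' (Type u) ⟶
      presheafToSheaf K (Type u) ⋙ A.sheafPushforwardContinuous (Type u) K' K :=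
  (mateEquiv (sheafificationAdjunction K (Type u))
      (sheafificationAdjunction K' (Type u))).symm
    (TwoSquare.mk _ _ _ _ (𝟙 (sheafToPresheaf K (Type u) ⋙ pre A)))

/-- Precomposition with `φ.op`, as a natural transformation between precomposition
functors on presheaf categories. -/
def theta (φ : A ⋙ p ⟶ p' ⋙ B) : pre B ⋙ pre p' ⟶ pre p ⋙ pre A :=
  (Functor.whiskeringLeft D'ᵒᵖ Cᵒᵖ (Type u)).map (NatTrans.op φ)

end Statement8

namespace Statement8

variable {C D C' D' : Type u} [SmallCategory C] [SmallCategory D]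
  [SmallCategory C'] [SmallCategory D']
  (J : GrothendieckTopology C) (K : GrothendieckTopology D)
  (J' : GrothendieckTopology C') (K' : GrothendieckTopology D')
  (p : D ⥤ C) (p' : D' ⥤ C') (B : C' ⥤ C) (A : D' ⥤ D)

/-- The canonical comparison `φ̄ : C_{p'}^* ∘ Sh(B)_* ⟶ Sh(A)_* ∘ C_p^*` induced by
precomposition with `φ`; it is the mate of `φ̃`. -/
def phiBar [Functor.IsContinuous.{u} A K' K] [Functor.IsContinuous.{u} B J' J]
    (φ : A ⋙ p ⟶ p' ⋙ B) :
    B.sheafPushforwardContinuous (Type u) J' J ⋙ Cstar J' p' K' ⟶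
      Cstar J p K ⋙ A.sheafPushforwardContinuous (Type u) K' K :=
  Functor.whiskerRight (Functor.whiskerLeft (sheafToPresheaf J (Type u)) (theta p p' B A φ))
      (presheafToSheaf K' (Type u)) ≫
    Functor.whiskerLeft (sheafToPresheaf J (Type u) ⋙ pre p) (delta3 K K' A)

/-- `φ̃ : Sh(A)^* ∘ C_{p'}^* ⟶ C_p^* ∘ Sh(B)^*`, the mate of `φ̄`. -/
def phiTilde [Functor.IsContinuous.{u} A K' K] [Functor.IsContinuous.{u} B J' J]
    (φ : A ⋙ p ⟶ p' ⋙ B) :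
    Cstar J' p' K' ⋙ A.sheafPullback (Type u) K' K ⟶
      B.sheafPullback (Type u) J' J ⋙ Cstar J p K :=
  (mateEquiv (B.sheafAdjunctionContinuous (Type u) J' J)
      (A.sheafAdjunctionContinuous (Type u) K' K)).symm
    (phiBar J K J' K' p p' B A φ)

end Statement8

namespace Statement8

variable {C D C' D' : Type u} [SmallCategory C] [SmallCategory D]
  [SmallCategory C'] [SmallCategory D']
  (J : GrothendieckTopology C) (K : GrothendieckTopology D)
  (J' : GrothendieckTopology C') (K' : GrothendieckTopology D')
  (p : D ⥤ C) (p' : D' ⥤ C') (B : C' ⥤ C) (A : D' ⥤ D)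

/-- The η-extension of `(A, φ)`:
`(F', E', α') ↦ (Sh(A)^*(F'), Sh(B)^*(E'), φ̃_{E'} ∘ Sh(A)^*(α'))`. -/
def etaExt [Functor.IsContinuous.{u} A K' K] [Functor.IsContinuous.{u} B J' J]
    (φ : A ⋙ p ⟶ p' ⋙ B) :
    Comma (𝟭 (Sheaf K' (Type u))) (Cstar J' p' K') ⥤
      Comma (𝟭 (Sheaf K (Type u))) (Cstar J p K) where
  obj X :=
    { left := (A.sheafPullback (Type u) K' K).obj X.left
      right := (B.sheafPullback (Type u) J' J).obj X.right
      hom := (A.sheafPullback (Type u) K' K).map X.hom ≫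
        (phiTilde J K J' K' p p' B A φ).app X.right }
  map {X Y} m :=
    { left := (A.sheafPullback (Type u) K' K).map m.left
      right := (B.sheafPullback (Type u) J' J).map m.right
      w := by
        have hw := m.w
        have hnat := (phiTilde J K J' K' p p' B A φ).naturality m.right
        simp only [Functor.id_map] at hw ⊢
        simp only [Functor.comp_map] at hnat
        rw [← Category.assoc, ← Functor.map_comp, hw, Functor.map_comp, Category.assoc,
          hnat, ← Category.assoc] }

end Statement8

namespace Statement8

variable {C D C' D' C'' D'' : Type u} [SmallCategory C] [SmallCategory D]
  [SmallCategory C'] [SmallCategory D'] [SmallCategory C''] [SmallCategory D'']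

/-- A functor `p : (D, K) → (C, J)` is a *comorphism of sites* if for every object `d` of `D`
and every `J`-covering sieve `S` on `p(d)` there is a `K`-covering sieve `S'` on `d` with
`p(S') ⊆ S`. -/
def IsComorphismOfSites {C₁ C₂ : Type*} [Category C₁] [Category C₂] (q : C₁ ⥤ C₂)
    (K : GrothendieckTopology C₁) (J : GrothendieckTopology C₂) : Prop :=
  ∀ (d : C₁) (S : Sieve (q.obj d)), S ∈ J (q.obj d) →
    ∃ S' ∈ K d, ∀ ⦃d' : C₁⦄ (g : d' ⟶ d), S' g → S (q.map g)

/-! `φ̃` is the mate of `φ̄`, which is pasted from precomposition with `φ` and the comparison `δ`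
between sheafification and pushforward. Precomposition is strictly functorial, and `δ` for a
composite is the pasting of the `δ`s because mates respect pasting; hence `φ̄` of the composite pair
is the horizontal pasting of `φ̄` and `φ̄'`. Taking mates once more, `φ̃` of the composite pair is the
vertical pasting of `φ̃'` and `φ̃`, up to the canonical isomorphisms
`Sh(A ∘ A')^* ≅ Sh(A)^* ∘ Sh(A')^*` (the conjugates of identities). Their components assemble into
the isomorphism of η-extensions. -/

section

variable (J : GrothendieckTopology C) (K : GrothendieckTopology D)
  (J' : GrothendieckTopology C') (K' : GrothendieckTopology D')
  (J'' : GrothendieckTopology C'') (K'' : GrothendieckTopology D'')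
  (p : D ⥤ C) (p' : D' ⥤ C') (p'' : D'' ⥤ C'')
  (B : C' ⥤ C) (B' : C'' ⥤ C') (A : D' ⥤ D) (A' : D'' ⥤ D')

lemma theta_comp (φ : A ⋙ p ⟶ p' ⋙ B) (φ' : A' ⋙ p' ⟶ p'' ⋙ B') :
    theta p p'' (B' ⋙ B) (A' ⋙ A) (Functor.whiskerLeft A' φ ≫ Functor.whiskerRight φ' B) =
      Functor.whiskerLeft (pre B) (theta p' p'' B' A' φ') ≫
        Functor.whiskerRight (theta p p' B A φ) (pre A') := by
  ext P d''
  simp [theta]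

variable [Functor.IsContinuous.{u} A K' K] [Functor.IsContinuous.{u} B J' J]
  [Functor.IsContinuous.{u} A' K'' K'] [Functor.IsContinuous.{u} B' J'' J']
  [Functor.IsContinuous.{u} (A' ⋙ A) K'' K] [Functor.IsContinuous.{u} (B' ⋙ B) J'' J]

lemma delta3_comp :
    delta3 K K'' (A' ⋙ A) = TwoSquare.hComp (delta3 K K' A) (delta3 K' K'' A') := by
  have h := mateEquiv_vcomp (sheafificationAdjunction K (Type u))
    (sheafificationAdjunction K' (Type u)) (sheafificationAdjunction K'' (Type u))
    (delta3 K K' A) (delta3 K' K'' A')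
  simp only [delta3, Equiv.apply_symm_apply] at h
  refine (Equiv.symm_apply_eq _).2 (Eq.trans ?_ h.symm)
  ext X
  simp [TwoSquare.vComp]
  rfl

lemma delta3_comp_app (P : Dᵒᵖ ⥤ Type u) :
    (delta3 K K'' (A' ⋙ A)).app P = (delta3 K' K'' A').app ((pre A).obj P) ≫
      (A'.sheafPushforwardContinuous (Type u) K'' K').map ((delta3 K K' A).app P) :=
  (congr_app (delta3_comp K K' K'' A A') P).trans (TwoSquare.hComp_app _ _ P)

lemma phiBar_app (φ : A ⋙ p ⟶ p' ⋙ B) (E : Sheaf J (Type u)) :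
    (phiBar J K J' K' p p' B A φ).app E =
      (presheafToSheaf K' (Type u)).map ((theta p p' B A φ).app E.obj) ≫
        (delta3 K K' A).app ((pre p).obj E.obj) := rfl

lemma phiBar_comp (φ : A ⋙ p ⟶ p' ⋙ B) (φ' : A' ⋙ p' ⟶ p'' ⋙ B') :
    phiBar J K J'' K'' p p'' (B' ⋙ B) (A' ⋙ A)
        (Functor.whiskerLeft A' φ ≫ Functor.whiskerRight φ' B) =
      TwoSquare.hComp (phiBar J K J' K' p p' B A φ) (phiBar J' K' J'' K'' p' p'' B' A' φ') := by
  ext E : 2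
  refine Eq.trans ?_ (TwoSquare.hComp_app (phiBar J K J' K' p p' B A φ)
    (phiBar J' K' J'' K'' p' p'' B' A' φ') E).symm
  rw [phiBar_app, phiBar_app, phiBar_app, theta_comp, delta3_comp_app K K' K'' A A']
  simp only [NatTrans.comp_app, Functor.whiskerLeft_app, Functor.whiskerRight_app,
    Functor.map_comp]
  let P := E.obj
  let Sh'' := presheafToSheaf K'' (Type u)
  let θ := theta p p' B A φ
  let δ' := delta3 K' K'' A'
  let M := A'.sheafPushforwardContinuous (Type u) K'' K'
  -- restates the goal with `pre (A' ⋙ A)` unfolded to `pre A ⋙ pre A'`, so that `rw` can act on it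
  show (Sh''.map ((theta p' p'' B' A' φ').app ((pre B).obj P)) ≫
      Sh''.map ((pre A').map (θ.app P))) ≫ δ'.app ((pre A).obj ((pre p).obj P)) ≫
        M.map ((delta3 K K' A).app ((pre p).obj P)) =
    (Sh''.map ((theta p' p'' B' A' φ').app ((pre B).obj P)) ≫
        δ'.app ((pre p').obj ((pre B).obj P))) ≫
      M.map ((presheafToSheaf K' (Type u)).map (θ.app P) ≫ (delta3 K K' A).app ((pre p).obj P))
  rw [Category.assoc, reassoc_of% (δ'.naturality (θ.app P)), Category.assoc, Functor.map_comp]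

def sheafPullbackCompIso :
    (A' ⋙ A).sheafPullback (Type u) K'' K ≅
      A'.sheafPullback (Type u) K'' K' ⋙ A.sheafPullback (Type u) K' K :=
  (conjugateIsoEquiv
    ((A'.sheafAdjunctionContinuous (Type u) K'' K').comp
      (A.sheafAdjunctionContinuous (Type u) K' K))
    ((A' ⋙ A).sheafAdjunctionContinuous (Type u) K'' K)).symm (Iso.refl _)

lemma conjugateEquiv_sheafPullbackCompIso_hom :
    conjugateEquiv ((A'.sheafAdjunctionContinuous (Type u) K'' K').comp
        (A.sheafAdjunctionContinuous (Type u) K' K))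
      ((A' ⋙ A).sheafAdjunctionContinuous (Type u) K'' K)
      (sheafPullbackCompIso K K' K'' A A').hom = 𝟙 _ :=
  (conjugateEquiv _ _).apply_symm_apply _

lemma mateEquiv_phiTilde (φ : A ⋙ p ⟶ p' ⋙ B) :
    mateEquiv (B.sheafAdjunctionContinuous (Type u) J' J)
      (A.sheafAdjunctionContinuous (Type u) K' K) (phiTilde J K J' K' p p' B A φ) =
      phiBar J K J' K' p p' B A φ :=
  Equiv.apply_symm_apply _ _

lemma phiTilde_comp (φ : A ⋙ p ⟶ p' ⋙ B) (φ' : A' ⋙ p' ⟶ p'' ⋙ B') :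
    (TwoSquare.vComp (phiTilde J' K' J'' K'' p' p'' B' A' φ')
        (phiTilde J K J' K' p p' B A φ)).whiskerRight (sheafPullbackCompIso K K' K'' A A').hom =
    TwoSquare.whiskerLeft (phiTilde J K J'' K'' p p'' (B' ⋙ B) (A' ⋙ A)
        (Functor.whiskerLeft A' φ ≫ Functor.whiskerRight φ' B))
      (sheafPullbackCompIso J J' J'' B B').hom := by
  let adjB := (B'.sheafAdjunctionContinuous (Type u) J'' J').comp
    (B.sheafAdjunctionContinuous (Type u) J' J)
  let adjA := (A'.sheafAdjunctionContinuous (Type u) K'' K').comp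
    (A.sheafAdjunctionContinuous (Type u) K' K)
  let adjBB := (B' ⋙ B).sheafAdjunctionContinuous (Type u) J'' J
  let adjAA := (A' ⋙ A).sheafAdjunctionContinuous (Type u) K'' K
  apply (mateEquiv adjB adjAA).injective
  refine (mateEquiv_conjugateEquiv_vcomp adjB adjA adjAA _ _).trans
    (Eq.trans ?_ (conjugateEquiv_mateEquiv_vcomp adjB adjBB adjAA _ _).symm)
  rw [mateEquiv_hcomp (B'.sheafAdjunctionContinuous (Type u) J'' J')
    (A'.sheafAdjunctionContinuous (Type u) K'' K') (B.sheafAdjunctionContinuous (Type u) J' J)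
    (A.sheafAdjunctionContinuous (Type u) K' K)
    (phiTilde J' K' J'' K'' p' p'' B' A' φ') (phiTilde J K J' K' p p' B A φ)]
  rw [mateEquiv_phiTilde, mateEquiv_phiTilde, mateEquiv_phiTilde,
    phiBar_comp J K J' K' J'' K'' p p' p'' B B' A A' φ φ',
    conjugateEquiv_sheafPullbackCompIso_hom K K' K'' A A',
    conjugateEquiv_sheafPullbackCompIso_hom J J' J'' B B']
  refine TwoSquare.ext _ _ fun X => ?_
  erw [TwoSquare.whiskerBottom_app, TwoSquare.whiskerTop_app, NatTrans.id_app, NatTrans.id_app,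
    CategoryTheory.Functor.map_id, Category.comp_id]

lemma phiTilde_comp_app (φ : A ⋙ p ⟶ p' ⋙ B) (φ' : A' ⋙ p' ⟶ p'' ⋙ B')
    (E : Sheaf J'' (Type u)) :
    (sheafPullbackCompIso K K' K'' A A').hom.app ((Cstar J'' p'' K'').obj E) ≫
        (A.sheafPullback (Type u) K' K).map ((phiTilde J' K' J'' K'' p' p'' B' A' φ').app E) ≫
          (phiTilde J K J' K' p p' B A φ).app ((B'.sheafPullback (Type u) J'' J').obj E) =
      (phiTilde J K J'' K'' p p'' (B' ⋙ B) (A' ⋙ A)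
          (Functor.whiskerLeft A' φ ≫ Functor.whiskerRight φ' B)).app E ≫
        (Cstar J p K).map ((sheafPullbackCompIso J J' J'' B B').hom.app E) := by
  have h := congr_app (phiTilde_comp J K J' K' J'' K'' p p' p'' B B' A A' φ φ') E
  simp only [TwoSquare.whiskerRight, TwoSquare.whiskerLeft, TwoSquare.vComp, NatTrans.comp_app,
    Functor.whiskerLeft_app, Functor.whiskerRight_app, Functor.comp_obj,
    Functor.associator_hom_app, Functor.associator_inv_app, Category.id_comp,
    Category.comp_id] at h
  exact h

def etaExtCompIso (φ : A ⋙ p ⟶ p' ⋙ B) (φ' : A' ⋙ p' ⟶ p'' ⋙ B') :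
    etaExt J K J'' K'' p p'' (B' ⋙ B) (A' ⋙ A)
        (Functor.whiskerLeft A' φ ≫ Functor.whiskerRight φ' B) ≅
      etaExt J' K' J'' K'' p' p'' B' A' φ' ⋙ etaExt J K J' K' p p' B A φ :=
  NatIso.ofComponents
    (fun X => Comma.isoMk ((sheafPullbackCompIso K K' K'' A A').app X.left)
      ((sheafPullbackCompIso J J' J'' B B').app X.right) (by
        dsimp [etaExt]
        have hσ := (sheafPullbackCompIso K K' K'' A A').hom.naturality X.hom
        dsimp only [Functor.comp_map] at hσ
        rw [Functor.map_comp, ← Category.assoc, ← reassoc_of% hσ]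
        simp only [Category.assoc]
        rw [phiTilde_comp_app]))
    (fun m => by
      ext : 1
      · exact (sheafPullbackCompIso K K' K'' A A').hom.naturality m.left
      · exact (sheafPullbackCompIso J J' J'' B B').hom.naturality m.right)

end

theorem statement8_general
    (J : GrothendieckTopology C) (K : GrothendieckTopology D)
    (J' : GrothendieckTopology C') (K' : GrothendieckTopology D')
    (J'' : GrothendieckTopology C'') (K'' : GrothendieckTopology D'')
    (p : D ⥤ C) (p' : D' ⥤ C') (p'' : D'' ⥤ C'')
    (B : C' ⥤ C) (B' : C'' ⥤ C') (A : D' ⥤ D) (A' : D'' ⥤ D')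
    [Functor.IsContinuous.{u} A K' K] [Functor.IsContinuous.{u} B J' J]
    [Functor.IsContinuous.{u} A' K'' K'] [Functor.IsContinuous.{u} B' J'' J']
    (φ : A ⋙ p ⟶ p' ⋙ B) (φ' : A' ⋙ p' ⟶ p'' ⋙ B') :
    haveI : Functor.IsContinuous.{u} (A' ⋙ A) K'' K :=
      Functor.isContinuous_comp A' A K'' K' K
    haveI : Functor.IsContinuous.{u} (B' ⋙ B) J'' J :=
      Functor.isContinuous_comp B' B J'' J' J
    Nonempty
      (etaExt J K J'' K'' p p'' (B' ⋙ B) (A' ⋙ A)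
          (Functor.whiskerLeft A' φ ≫ Functor.whiskerRight φ' B) ≅
        etaExt J' K' J'' K'' p' p'' B' A' φ' ⋙ etaExt J K J' K' p p' B A φ) := by
  have := Functor.isContinuous_comp A' A K'' K' K
  have := Functor.isContinuous_comp B' B J'' J' J
  exact ⟨etaExtCompIso J K J' K' J'' K'' p p' p'' B B' A A' φ φ'⟩

theorem statement8
    (J : GrothendieckTopology C) (K : GrothendieckTopology D)
    (J' : GrothendieckTopology C') (K' : GrothendieckTopology D')
    (J'' : GrothendieckTopology C'') (K'' : GrothendieckTopology D'')
    (p : D ⥤ C) (p' : D' ⥤ C') (p'' : D'' ⥤ C'')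
    (B : C' ⥤ C) (B' : C'' ⥤ C') (A : D' ⥤ D) (A' : D'' ⥤ D')
    (hp : IsComorphismOfSites p K J) (hp' : IsComorphismOfSites p' K' J')
    (hp'' : IsComorphismOfSites p'' K'' J'')
    [Functor.IsContinuous.{u} A K' K] [Functor.IsContinuous.{u} B J' J]
    [Functor.IsContinuous.{u} A' K'' K'] [Functor.IsContinuous.{u} B' J'' J']
    (hB : PreservesFiniteLimits (B.sheafPullback (Type u) J' J))
    (hB' : PreservesFiniteLimits (B'.sheafPullback (Type u) J'' J'))
    (φ : A ⋙ p ⟶ p' ⋙ B) (φ' : A' ⋙ p' ⟶ p'' ⋙ B') :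
    haveI : Functor.IsContinuous.{u} (A' ⋙ A) K'' K :=
      Functor.isContinuous_comp A' A K'' K' K
    haveI : Functor.IsContinuous.{u} (B' ⋙ B) J'' J :=
      Functor.isContinuous_comp B' B J'' J' J
    Nonempty
      (etaExt J K J'' K'' p p'' (B' ⋙ B) (A' ⋙ A)
          (Functor.whiskerLeft A' φ ≫ Functor.whiskerRight φ' B) ≅
        etaExt J' K' J'' K'' p' p'' B' A' φ' ⋙ etaExt J K J' K' p p' B A φ) :=
  statement8_general J K J' K' J'' K'' p p' p'' B B' A A' φ φ'

end Statement8
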